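/- Let R be an infinite integral domain and n ≥ 2. If p(x₁,...,xₙ) = c₀ + Σ_{i=1}^n c_i x_i is an associative affine function with c₁ = cₙ = 1, then c_i = c₂^{i-1} for every i ∈ {1,...,n} and c₂^{n-1} = 1; moreover either c₀ = 0 or c₁ = c₂ = ⋯ = cₙ. -/

import Mathlib

/-- Substituting `f` applied to the window `x_i, ..., x_{i+n-1}` into slot `i`
of `f` applied to the remaining outer variables among `x_1, ..., x_{2n-1}`. -/
def nestAt {R : Type*} (n : ℕ) (f : (Fin n → R) → R) (i : Fin n)
    (x : Fin (2 * n - 1) → R) : R :=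
  f (fun j =>
    if (j : ℕ) < (i : ℕ) then x ⟨j, by have := j.isLt; have := i.isLt; omega⟩
    else if (j : ℕ) = (i : ℕ) then
      f (fun k => x ⟨(i : ℕ) + (k : ℕ), by have := k.isLt; have := i.isLt; omega⟩)
    else x ⟨(j : ℕ) + n - 1, by have := j.isLt; have := i.isLt; omega⟩)

/-- `f` is `n`-ary associative: all the bracketings coincide. -/
def IsNAssoc {R : Type*} (n : ℕ) (f : (Fin n → R) → R) : Prop :=
  ∀ i j : Fin n, ∀ x : Fin (2 * n - 1) → R, nestAt n f i x = nestAt n f j x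

/-!
Coefficients are indexed from `0` here, so `c 0` and `c 1` are the paper's `c₁` and `c₂`.
Evaluating two bracketings at the zero vector gives `c₀ + c_i c₀ = c₀ + c_j c₀`, so either
`c₀ = 0` or all `c_i` agree. Evaluating the bracketings at positions `0` and `k` on the unit
vector supported at position `k + 1` gives `c_0 (c₀ + c_{k+1}) = c_k (c₀ + c_1)`, hence
`c_{k+1} = c_k c_1` once `c_0 = 1`; so `c_i = c_1^i`, and `c_{n-1} = 1` becomes `c_1^{n-1} = 1`.
-/

section nestAt

variable {R : Type*} [Zero R] {n : ℕ} (f : (Fin n → R) → R) (i : Fin n)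

theorem nestAt_zero : nestAt n f i 0 = f (Pi.single i (f 0)) := by
  unfold nestAt
  congr 1
  funext j
  split_ifs with hlt heq
  · rw [Pi.zero_apply, Pi.single_eq_of_ne (Fin.ne_of_val_ne (by omega))]
  · rw [Fin.ext heq, Pi.single_eq_same]
    rfl
  · rw [Pi.zero_apply, Pi.single_eq_of_ne (Fin.ne_of_val_ne heq)]

theorem nestAt_single (m : Fin (2 * n - 1)) (a : R) (him : i.val ≤ m.val)
    (hmi : m.val < i.val + n) :
    nestAt n f i (Pi.single m a) =
      f (Pi.single i (f (Pi.single ⟨m - i, by omega⟩ a))) := by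
  unfold nestAt
  congr 1
  funext j
  split_ifs with hlt heq
  · simp only [Pi.single_apply, Fin.ext_iff]
    rw [if_neg (by omega), if_neg (by omega)]
  · rw [Pi.single_apply, if_pos (Fin.ext heq)]
    congr 1
    funext k
    simp only [Pi.single_apply, Fin.ext_iff]
    congr 1
    apply propext
    omega
  · simp only [Pi.single_apply, Fin.ext_iff]
    rw [if_neg (by omega), if_neg (by omega)]

end nestAt

section Affine

variable {R : Type*} [Ring R] {n : ℕ} {c₀ : R} {c : Fin n → R}

theorem affine_single (i : Fin n) (a : R) :
    c₀ + ∑ j, c j * (Pi.single i a : Fin n → R) j = c₀ + c i * a := by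
  simp [Pi.single_apply]

variable (hassoc : IsNAssoc n (fun x : Fin n → R => c₀ + ∑ i, c i * x i))
include hassoc

theorem IsNAssoc.affine_mul_const_eq (i j : Fin n) : c i * c₀ = c j * c₀ := by
  have h := hassoc i j 0
  simp only [nestAt_zero, affine_single, Pi.zero_apply, mul_zero, Finset.sum_const_zero,
    add_zero] at h
  exact add_left_cancel h

theorem IsNAssoc.affine_mul_succ_eq (k : ℕ) (hk : k + 1 < n) :
    c ⟨0, by omega⟩ * c ⟨k + 1, hk⟩ = c ⟨k, by omega⟩ * c ⟨1, by omega⟩ := by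
  have h : c₀ + c ⟨0, by omega⟩ * (c₀ + c ⟨k + 1, hk⟩) =
      c₀ + c ⟨k, by omega⟩ * (c₀ + c ⟨1, by omega⟩) := by
    have h := hassoc ⟨0, by omega⟩ ⟨k, by omega⟩ (Pi.single ⟨k + 1, by omega⟩ 1)
    rw [nestAt_single _ _ _ _ (by simp) (by simp; omega),
      nestAt_single _ _ _ _ (by simp) (by simp; omega)] at h
    simpa only [affine_single, mul_one, Fin.val_mk, Nat.sub_zero, add_tsub_cancel_left] using h
  rw [mul_add, mul_add, hassoc.affine_mul_const_eq ⟨0, by omega⟩ ⟨k, by omega⟩] at h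
  exact add_left_cancel (add_left_cancel h)

theorem IsNAssoc.affine_coeff_eq_pow (hn : 1 < n) (h1 : c ⟨0, by omega⟩ = 1) (m : ℕ)
    (hm : m < n) :
    c ⟨m, hm⟩ = c ⟨1, by omega⟩ ^ m := by
  induction m with
  | zero => simpa using h1
  | succ k ih =>
    rw [← one_mul (c _), ← h1, hassoc.affine_mul_succ_eq k hm, ih (by omega), pow_succ]

end Affine

theorem stmt_10 {R : Type*} [CommRing R] [IsDomain R]
    (n : ℕ) (hn : 2 ≤ n) (c₀ : R) (c : Fin n → R)
    (hassoc : IsNAssoc n (fun x : Fin n → R => c₀ + ∑ i, c i * x i))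
    (h1 : c ⟨0, by omega⟩ = 1) (hnn : c ⟨n - 1, by omega⟩ = 1) :
    (∀ i : Fin n, c i = c ⟨1, by omega⟩ ^ i.val) ∧
      c ⟨1, by omega⟩ ^ (n - 1) = 1 ∧
      (c₀ = 0 ∨ ∀ i j : Fin n, c i = c j) := by
  refine ⟨fun i => hassoc.affine_coeff_eq_pow hn h1 i i.isLt, ?_, ?_⟩
  · rw [← hassoc.affine_coeff_eq_pow hn h1 (n - 1) (by omega), hnn]
  · by_cases hc₀ : c₀ = 0
    · exact Or.inl hc₀
    · exact Or.inr fun i j => mul_right_cancel₀ hc₀ (hassoc.affine_mul_const_eq i j)
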